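/- Let A \subseteq B be an extension of commutative rings and M a finitely generated flat A-module such that M \otimes_A B is B-projective. Then Ann_A(M) is a principal ideal generated by an idempotent, and Ann_A(M) \cdot B = Ann_B(M \otimes_A B). -/

import Mathlib

/-!
The annihilator of a finitely generated projective `B`-module `N` is generated by an idempotent
`f`: by Nakayama applied to `N = τ N`, with `τ` the trace ideal, there is `f ∈ Ann N` with
`f - 1 ∈ τ`, and `Ann N · τ = 0`. Apply this to `N = B ⊗_A M`. Since `M` is flat and
`A ⧸ Ann_A(f) ↪ B`, the vanishing of `f ⊗ m` forces `M = Ann_A(f) M`; Nakayama over `A` yields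
`e ∈ Ann_A M` with `e f = f`. Every `a ∈ Ann_A M` maps into `B f`, so `a e = a` after the
injection into `B`: hence `Ann_A M = (e)`, and `f = e f` lies in the extended ideal.
-/

open TensorProduct

theorem Ideal.eq_span_singleton_of_forall_mul_eq_self {R : Type*} [CommSemiring R]
    {I : Ideal R} {e : R} (he : e ∈ I) (h : ∀ a ∈ I, a * e = a) : I = Ideal.span {e} :=
  le_antisymm (fun a ha => Ideal.mem_span_singleton'.mpr ⟨a, h a ha⟩)
    ((Ideal.span_singleton_le_iff_mem I).mpr he)

namespace Module

variable {R M : Type*} [CommRing R] [AddCommGroup M] [Module R M]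

theorem exists_mem_annihilator_sub_one_mem [Module.Finite R M] {I : Ideal R}
    (hI : I • (⊤ : Submodule R M) = ⊤) : ∃ e ∈ annihilator R M, e - 1 ∈ I := by
  obtain ⟨e, he1, he⟩ :=
    Submodule.exists_sub_one_mem_and_smul_eq_zero_of_fg_of_le_smul I ⊤ Module.Finite.fg_top hI.ge
  exact ⟨e, mem_annihilator.mpr fun m => he m trivial, he1⟩

variable (R M) in
def traceIdeal : Ideal R :=
  ⨆ g : Dual R M, LinearMap.range g

theorem apply_mem_traceIdeal (g : Dual R M) (x : M) : g x ∈ traceIdeal R M :=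
  le_iSup (fun g : Dual R M => LinearMap.range g) g ⟨x, rfl⟩

theorem annihilator_mul_traceIdeal : annihilator R M * traceIdeal R M = ⊥ := by
  rw [traceIdeal, Ideal.mul_iSup, iSup_eq_bot]
  intro g
  rw [eq_bot_iff, Ideal.mul_le]
  rintro a ha _ ⟨x, rfl⟩
  rw [Submodule.mem_bot, ← smul_eq_mul, ← map_smul, mem_annihilator.mp ha, map_zero]

theorem traceIdeal_smul_top [Projective R M] : traceIdeal R M • (⊤ : Submodule R M) = ⊤ := by
  obtain ⟨s, hs⟩ := projective_def.mp ‹Projective R M›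
  refine eq_top_iff.mpr fun x _ => ?_
  rw [← hs x, Finsupp.linearCombination_apply, Finsupp.sum]
  exact Submodule.sum_mem _ fun p _ =>
    Submodule.smul_mem_smul (apply_mem_traceIdeal ((Finsupp.lapply p).comp s) x) trivial

theorem Projective.exists_isIdempotentElem_annihilator_eq_span [Module.Finite R M]
    [Projective R M] : ∃ f : R, IsIdempotentElem f ∧ annihilator R M = Ideal.span {f} := by
  obtain ⟨f, hf, hf1⟩ :=
    exists_mem_annihilator_sub_one_mem (traceIdeal_smul_top (R := R) (M := M))
  have hmul : ∀ a ∈ annihilator R M, a * f = a := fun a ha => by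
    have h0 : a * (f - 1) = 0 := by
      simpa [annihilator_mul_traceIdeal] using Ideal.mul_mem_mul ha hf1
    linear_combination h0
  exact ⟨f, hmul f hf, Ideal.eq_span_singleton_of_forall_mul_eq_self hf hmul⟩

theorem map_annihilator_le_annihilator_baseChange (S : Type*) [CommRing S] [Algebra R S] :
    (annihilator R M).map (algebraMap R S) ≤ annihilator S (S ⊗[R] M) := by
  refine Ideal.map_le_iff_le_comap.mpr fun a ha => mem_annihilator.mpr fun x => ?_
  rw [algebraMap_smul]
  induction x using TensorProduct.induction_on with
  | zero => exact smul_zero a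
  | tmul b m => rw [← tmul_smul, mem_annihilator.mp ha m, tmul_zero]
  | add x y hx hy => rw [smul_add, hx, hy, add_zero]

theorem Flat.torsionOf_smul_top_eq_top [Flat R M] {N : Type*} [AddCommGroup N] [Module R N]
    {x : N} (hx : ∀ m : M, x ⊗ₜ[R] m = 0) :
    Ideal.torsionOf R N x • (⊤ : Submodule R M) = ⊤ := by
  set ι := (R ∙ x).subtype ∘ₗ (Ideal.quotTorsionOfEquivSpanSingleton R N x).toLinearMap
  have hι : Function.Injective (ι.rTensor M) :=
    Flat.rTensor_preserves_injective_linearMap ι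
      (Subtype.val_injective.comp (LinearEquiv.injective _))
  refine eq_top_iff.mpr fun m _ => ?_
  have h1 : Ideal.Quotient.mk (Ideal.torsionOf R N x) 1 ⊗ₜ[R] m = 0 := hι <| by
    rw [map_zero, LinearMap.rTensor_tmul, ← hx m]
    simp [ι, ← Ideal.Quotient.mk_eq_mk]
  have h2 := congrArg (quotTensorEquivQuotSMul M _) h1
  rw [quotTensorEquivQuotSMul_mk_tmul, one_smul, map_zero] at h2
  exact (Submodule.Quotient.mk_eq_zero _).mp h2

end Module

/-- If `A ⊆ B` is a ring extension, `M` a finitely generated flat `A`-module with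
`M ⊗_A B` projective over `B`, then `Ann_A(M)` is principal generated by an
idempotent, and its extension to `B` is `Ann_B(M ⊗_A B)`. -/
theorem annihilator_principal_and_extension
    (A B M : Type*) [CommRing A] [CommRing B] [Algebra A B]
    (hinj : Function.Injective (algebraMap A B))
    [AddCommGroup M] [Module A M] [Module.Finite A M] [Module.Flat A M]
    (hproj : Module.Projective B (B ⊗[A] M)) :
    (∃ e : A, IsIdempotentElem e ∧ Module.annihilator A M = Ideal.span {e}) ∧
      Ideal.map (algebraMap A B) (Module.annihilator A M) =
        Module.annihilator B (B ⊗[A] M) := by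
  obtain ⟨f, -, hf⟩ := Module.Projective.exists_isIdempotentElem_annihilator_eq_span
    (R := B) (M := B ⊗[A] M)
  have hfM : ∀ m : M, f ⊗ₜ[A] m = 0 := fun m => by
    have := Module.mem_annihilator.mp (hf ▸ Ideal.mem_span_singleton_self f) ((1 : B) ⊗ₜ[A] m)
    rwa [smul_tmul', smul_eq_mul, mul_one] at this
  obtain ⟨e, he, he1⟩ :=
    Module.exists_mem_annihilator_sub_one_mem (Module.Flat.torsionOf_smul_top_eq_top hfM)
  have hef : algebraMap A B e * f = f := by
    rw [Ideal.mem_torsionOf_iff, Algebra.smul_def, map_sub, map_one] at he1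
    linear_combination he1
  have hmap := Module.map_annihilator_le_annihilator_baseChange (R := A) (M := M) B
  have hmul : ∀ a ∈ Module.annihilator A M, a * e = a := fun a ha => by
    obtain ⟨c, hc⟩ := Ideal.mem_span_singleton'.mp (hf ▸ hmap (Ideal.mem_map_of_mem _ ha))
    apply hinj
    rw [map_mul, ← hc, mul_assoc, mul_comm f, hef]
  refine ⟨⟨e, hmul e he, Ideal.eq_span_singleton_of_forall_mul_eq_self he hmul⟩,
    le_antisymm hmap ?_⟩
  rw [hf, Ideal.span_le, Set.singleton_subset_iff, ← hef]
  exact Ideal.mul_mem_right _ _ (Ideal.mem_map_of_mem _ he)
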